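/- Every cograph on n vertices is associated with a unique ordered cotree: if T' and T'' are two ordered rooted trees (each internal node with ≥ 2 children, siblings sorted non-decreasingly under the recursive node order) that are isomorphic as cotrees, then T' and T'' are identical. -/

import Mathlib

/-- Rooted trees: a node with a (possibly empty) list of children.
A leaf is a node with no children. -/
inductive RTree where
  | node : List RTree → RTree
deriving Repr

mutual
/-- Number of leaves of the subtree rooted at a node (`l(v)` in the paper). -/
def RTree.leafCount : RTree → ℕ
  | .node [] => 1
  | .node (t :: ts) => t.leafCount + RTree.leafCountList ts

def RTree.leafCountList : List RTree → ℕ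
  | [] => 0
  | t :: ts => t.leafCount + RTree.leafCountList ts
end

mutual
/-- Total number of nodes of a rooted tree. -/
def RTree.nodeCount : RTree → ℕ
  | .node ts => 1 + RTree.nodeCountList ts

def RTree.nodeCountList : List RTree → ℕ
  | [] => 0
  | t :: ts => t.nodeCount + RTree.nodeCountList ts
end

mutual
/-- Number of internal nodes (nodes with at least one child). -/
def RTree.internalCount : RTree → ℕ
  | .node [] => 0
  | .node (t :: ts) => 1 + t.internalCount + RTree.internalCountList ts

def RTree.internalCountList : List RTree → ℕ
  | [] => 0
  | t :: ts => t.internalCount + RTree.internalCountList ts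
end

mutual
/-- Member of 𝕋: every internal node has at least two children. -/
def RTree.WF : RTree → Prop
  | .node ts => ts.length ≠ 1 ∧ RTree.WFList ts

def RTree.WFList : List RTree → Prop
  | [] => True
  | t :: ts => t.WF ∧ RTree.WFList ts
end

/-- `Subtree s t`: `s` is the subtree rooted at some node of `t`. -/
inductive RTree.Subtree : RTree → RTree → Prop
  | refl (t : RTree) : RTree.Subtree t t
  | child {s c : RTree} {ts : List RTree} :
      c ∈ ts → RTree.Subtree s c → RTree.Subtree s (.node ts)

/-- The partition induced by a node: the non-decreasing sequence of
leaf-counts of its children. -/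
def inducedPartition (ts : List RTree) : List ℕ :=
  (ts.map RTree.leafCount).mergeSort (· ≤ ·)

/-- Generic lexicographic comparison of lists. -/
def lexCmp (c : α → α → Ordering) : List α → List α → Ordering
  | [], [] => .eq
  | [], _ :: _ => .lt
  | _ :: _, [] => .gt
  | a :: l, b :: m => (c a b).then (lexCmp c l m)

/-- Fuel-driven comparison of nodes, following Definition 3.1 of the paper:
compare leaf counts first, then induced partitions lexicographically, then
the lists of children, sorted w.r.t. this very order, lexicographically. -/
def nodeCmpF : ℕ → RTree → RTree → Ordering
  | 0, _, _ => .eq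
  | fuel + 1, .node ts, .node us =>
    (compare (RTree.node ts).leafCount (RTree.node us).leafCount).then <|
      (lexCmp compare (inducedPartition ts) (inducedPartition us)).then <|
        lexCmp (nodeCmpF fuel)
          (ts.mergeSort (fun a b => nodeCmpF fuel a b ≠ .gt))
          (us.mergeSort (fun a b => nodeCmpF fuel a b ≠ .gt))

/-- The recursive order of Definition 3.1 (a fuel of `sizeOf` is always
sufficient, since each recursive step strictly decreases the depth). -/
def nodeCmp (s t : RTree) : Ordering := nodeCmpF (s.nodeCount + t.nodeCount) s t

/-- `v < w` in the recursive node order. -/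
def NodeLT (v w : RTree) : Prop := nodeCmp v w = .lt

/-- `v ∼ w` (equivalence) in the recursive node order. -/
def NodeEquiv (v w : RTree) : Prop := nodeCmp v w = .eq

/-- Isomorphism of rooted trees: equality up to permutation of siblings. -/
inductive TreeIso : RTree → RTree → Prop
  | node {ts us us' : List RTree} :
      us.Perm us' → List.Forall₂ TreeIso ts us' → TreeIso (.node ts) (.node us)

mutual
/-- A tree is ordered if every siblinghood is sorted non-decreasingly
w.r.t. the recursive node order. -/
def RTree.Ordered : RTree → Prop
  | .node ts => ts.Chain' (fun a b => nodeCmp a b ≠ .gt) ∧ RTree.OrderedList ts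

def RTree.OrderedList : List RTree → Prop
  | [] => True
  | t :: ts => t.Ordered ∧ RTree.OrderedList ts
end

/-- A node is exhausted if it is a leaf or its induced partition is the
maximum element (⌊l/2⌋, ⌈l/2⌉) of Part(l). -/
def RTree.Exhausted : RTree → Prop
  | .node ts => ts = [] ∨
      inducedPartition ts =
        [(RTree.node ts).leafCount / 2, ((RTree.node ts).leafCount + 1) / 2]

/-! ### Auxiliary machinery for the uniqueness proof -/

section Aux

namespace Batteries

class OrientedCmp {α : Type*} (cmp : α → α → Ordering) : Prop where
  symm (x y : α) : (cmp x y).swap = cmp y x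

class TransCmp {α : Type*} (cmp : α → α → Ordering) : Prop extends OrientedCmp cmp where
  le_trans {x y z : α} : cmp x y ≠ .gt → cmp y z ≠ .gt → cmp x z ≠ .gt

abbrev TransOrd (α : Type*) [Ord α] := TransCmp (compare : α → α → Ordering)

theorem OrientedCmp.cmp_refl {α : Type*} {cmp : α → α → Ordering} [OrientedCmp cmp] {x : α} :
    cmp x x = .eq := by
  have h := OrientedCmp.symm (cmp := cmp) x x
  revert h
  cases cmp x x <;> decide

theorem OrientedCmp.cmp_eq_gt {α : Type*} {cmp : α → α → Ordering} [OrientedCmp cmp] {x y : α} :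
    cmp x y = .gt ↔ cmp y x = .lt := by
  rw [← OrientedCmp.symm (cmp := cmp) y x]
  cases cmp y x <;> decide

theorem TransCmp.toStd {α : Type*} {cmp : α → α → Ordering} (h : TransCmp cmp) :
    Std.TransCmp cmp where
  eq_swap {a b} := by rw [← h.toOrientedCmp.symm b a]
  isLE_trans h1 h2 := Ordering.ne_gt_iff_isLE.1
    (h.le_trans (Ordering.ne_gt_iff_isLE.2 h1) (Ordering.ne_gt_iff_isLE.2 h2))

theorem TransCmp.ofStd {α : Type*} {cmp : α → α → Ordering} (h : Std.TransCmp cmp) :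
    TransCmp cmp where
  symm x y := by rw [Std.OrientedCmp.eq_swap (cmp := cmp) (a := y) (b := x)]
  le_trans h1 h2 := Ordering.ne_gt_iff_isLE.2
    (Std.TransCmp.isLE_trans (Ordering.ne_gt_iff_isLE.1 h1) (Ordering.ne_gt_iff_isLE.1 h2))

theorem TransCmp.lt_le_trans {α : Type*} {cmp : α → α → Ordering} [h : TransCmp cmp] {x y z : α}
    (h1 : cmp x y = .lt) (h2 : cmp y z ≠ .gt) : cmp x z = .lt :=
  haveI := h.toStd
  Std.TransCmp.lt_of_lt_of_isLE h1 (Ordering.ne_gt_iff_isLE.1 h2)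

theorem TransCmp.cmp_congr_left {α : Type*} {cmp : α → α → Ordering} [h : TransCmp cmp]
    {x y z : α} (hxy : cmp x y = .eq) : cmp x z = cmp y z :=
  haveI := h.toStd
  Std.TransCmp.congr_left hxy

instance compareLex_transCmp {α : Type*} {c₁ c₂ : α → α → Ordering} [h₁ : TransCmp c₁]
    [h₂ : TransCmp c₂] : TransCmp (compareLex c₁ c₂) :=
  haveI := h₁.toStd
  haveI := h₂.toStd
  TransCmp.ofStd inferInstance

instance compareOn_transCmp {α β : Type*} [Ord β] [h : TransOrd β] (f : α → β) :
    TransCmp (compareOn f) where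
  symm a b := h.toOrientedCmp.symm (f a) (f b)
  le_trans h1 h2 := h.le_trans h1 h2

end Batteries

instance natTransOrd : Batteries.TransOrd ℕ where
  symm a b := by
    rcases Nat.lt_trichotomy a b with h | h | h
    · rw [Nat.compare_eq_lt.2 h, Nat.compare_eq_gt.2 h]; rfl
    · rw [Nat.compare_eq_eq.2 h, Nat.compare_eq_eq.2 h.symm]; rfl
    · rw [Nat.compare_eq_gt.2 h, Nat.compare_eq_lt.2 h]; rfl
  le_trans {a b c} h1 h2 := by
    rw [Ne, Nat.compare_eq_gt] at h1 h2 ⊢; omega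

theorem transCmp_comap {α β : Type*} {c : β → β → Ordering} (h : Batteries.TransCmp c)
    (g : α → β) : Batteries.TransCmp (fun a b => c (g a) (g b)) where
  symm a b := h.toOrientedCmp.symm (g a) (g b)
  le_trans h1 h2 := h.le_trans h1 h2

theorem lexCmp_swap {α : Type*} {c : α → α → Ordering} (hc : Batteries.OrientedCmp c) :
    ∀ l m : List α, (lexCmp c l m).swap = lexCmp c m l
  | [], [] => rfl
  | [], _ :: _ => rfl
  | _ :: _, [] => rfl
  | a :: l, b :: m => by
    simp only [lexCmp]
    rw [Ordering.swap_then, hc.symm a b, lexCmp_swap hc l m]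

theorem lexCmp_le_trans {α : Type*} {c : α → α → Ordering} (hc : Batteries.TransCmp c) :
    ∀ (l m n : List α), lexCmp c l m ≠ .gt → lexCmp c m n ≠ .gt → lexCmp c l n ≠ .gt := by
  haveI := hc
  intro l
  induction l with
  | nil => intro m n _ _; cases n <;> simp [lexCmp]
  | cons a l ih =>
    intro m n h1 h2
    cases m with
    | nil => simp [lexCmp] at h1
    | cons b m =>
      cases n with
      | nil => simp [lexCmp] at h2
      | cons d n =>
        simp only [lexCmp, ne_eq, Ordering.then_eq_gt, not_or, not_and] at h1 h2 ⊢
        obtain ⟨hab, h1'⟩ := h1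
        obtain ⟨hbd, h2'⟩ := h2
        refine ⟨Batteries.TransCmp.le_trans hab hbd, fun had => ?_⟩
        have hab' : c a b = .eq := by
          cases e : c a b with
          | eq => rfl
          | gt => exact absurd e hab
          | lt =>
            have hlt := Batteries.TransCmp.lt_le_trans e hbd
            rw [had] at hlt
            exact absurd hlt (by decide)
        have hbd' : c b d = .eq := (Batteries.TransCmp.cmp_congr_left hab').symm.trans had
        exact ih m n (h1' hab') (h2' hbd')

theorem lexCmp_transCmp {α : Type*} {c : α → α → Ordering} (hc : Batteries.TransCmp c) :
    Batteries.TransCmp (lexCmp c) where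
  symm l m := lexCmp_swap hc.toOrientedCmp l m
  le_trans {l m n} h1 h2 := lexCmp_le_trans hc l m n h1 h2

theorem lexCmp_congr {α : Type*} {c₁ c₂ : α → α → Ordering} :
    ∀ (l m : List α), (∀ a ∈ l, ∀ b ∈ m, c₁ a b = c₂ a b) → lexCmp c₁ l m = lexCmp c₂ l m
  | [], [], _ => rfl
  | [], _ :: _, _ => rfl
  | _ :: _, [], _ => rfl
  | a :: l, b :: m, h => by
    simp only [lexCmp]
    rw [h a (by simp) b (by simp),
      lexCmp_congr l m (fun x hx y hy => h x (by simp [hx]) y (by simp [hy]))]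

theorem lexCmp_eq_forall₂ {α : Type*} {c : α → α → Ordering} :
    ∀ {l m : List α}, lexCmp c l m = .eq → List.Forall₂ (fun a b => c a b = .eq) l m
  | [], [], _ => .nil
  | [], _ :: _, h => by simp [lexCmp] at h
  | _ :: _, [], h => by simp [lexCmp] at h
  | a :: l, b :: m, h => by
    simp only [lexCmp, Ordering.then_eq_eq] at h
    exact .cons h.1 (lexCmp_eq_forall₂ h.2)

/-- The induced partition of a node, as a function on trees. -/
def RTree.partOf : RTree → List ℕ
  | .node ts => inducedPartition ts

/-- The sorted children of a node (at a given fuel), as a function on trees. -/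
def RTree.skids (f : ℕ) : RTree → List RTree
  | .node ts => ts.mergeSort (fun a b => nodeCmpF f a b ≠ .gt)

theorem nodeCmpF_eq_compareLex (f : ℕ) : nodeCmpF (f + 1) =
    compareLex (compareOn RTree.leafCount)
      (compareLex (fun a b => lexCmp compare a.partOf b.partOf)
        (fun a b => lexCmp (nodeCmpF f) (RTree.skids f a) (RTree.skids f b))) := by
  funext a b
  cases a; cases b; rfl

theorem nodeCmpF_transCmp : ∀ f : ℕ, Batteries.TransCmp (nodeCmpF f)
  | 0 =>
    { symm := fun _ _ => rfl
      le_trans := fun _ _ => by simp [nodeCmpF] }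
  | f + 1 => by
    haveI h3 : Batteries.TransCmp
        (fun a b => lexCmp (nodeCmpF f) (RTree.skids f a) (RTree.skids f b)) :=
      transCmp_comap (lexCmp_transCmp (nodeCmpF_transCmp f)) (RTree.skids f)
    haveI h2 : Batteries.TransCmp
        (fun a b : RTree => lexCmp compare a.partOf b.partOf) :=
      transCmp_comap (lexCmp_transCmp natTransOrd) RTree.partOf
    rw [nodeCmpF_eq_compareLex]
    exact inferInstance

theorem RTree.nodeCount_eq (ts : List RTree) :
    (RTree.node ts).nodeCount = 1 + RTree.nodeCountList ts := rfl

theorem RTree.nodeCount_pos (t : RTree) : 1 ≤ t.nodeCount := by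
  obtain ⟨ts⟩ := t
  rw [RTree.nodeCount_eq]
  omega

theorem RTree.nodeCountList_cons (t : RTree) (ts : List RTree) :
    RTree.nodeCountList (t :: ts) = t.nodeCount + RTree.nodeCountList ts := rfl

theorem RTree.nodeCountList_mem_le {c : RTree} {ts : List RTree} (h : c ∈ ts) :
    c.nodeCount ≤ RTree.nodeCountList ts := by
  induction ts with
  | nil => simp at h
  | cons a ts ih =>
    have hsum := RTree.nodeCountList_cons a ts
    rcases List.mem_cons.1 h with rfl | h
    · omega
    · have := ih h
      omega

theorem RTree.nodeCountList_pair_le {c d : RTree} {ts : List RTree} (hc' : c ∈ ts)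
    (hd' : d ∈ ts) (hne : c ≠ d) :
    c.nodeCount + d.nodeCount ≤ RTree.nodeCountList ts := by
  revert hc' hd'
  induction ts with
  | nil => intro hc _; simp at hc
  | cons a ts ih =>
    intro hc hd
    have hsum := RTree.nodeCountList_cons a ts
    rcases List.mem_cons.1 hc with rfl | hcm
    · rcases List.mem_cons.1 hd with h' | hdm
      · exact absurd h'.symm hne
      · have hle := RTree.nodeCountList_mem_le hdm
        omega
    · rcases List.mem_cons.1 hd with h' | hdm
      · subst h'
        have hle := RTree.nodeCountList_mem_le hcm
        omega
      · have hle := ih hcm hdm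
        omega

theorem RTree.OrderedList.mem {c : RTree} {ts : List RTree} (h : RTree.OrderedList ts)
    (hm : c ∈ ts) : c.Ordered := by
  induction ts with
  | nil => simp at hm
  | cons a ts ih =>
    obtain ⟨h1, h2⟩ := h
    rcases List.mem_cons.1 hm with rfl | hm
    · exact h1
    · exact ih h2 hm

theorem chain'_imp_mem {α : Type*} {R S : α → α → Prop} :
    ∀ {l : List α}, (∀ a ∈ l, ∀ b ∈ l, R a b → S a b) → l.Chain' R → l.Chain' S
  | [], _, _ => List.isChain_nil
  | [_], _, _ => List.isChain_singleton _
  | a :: b :: l, h, hc => by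
    simp only [List.Chain', List.isChain_cons_cons] at hc ⊢
    exact ⟨h a (by simp) b (by simp) hc.1,
      chain'_imp_mem (fun x hx y hy => h x (by simp [hx]) y (by simp [hy])) hc.2⟩

theorem nodeCmpF_stable : ∀ (N : ℕ) (a b : RTree) (f g : ℕ), a.Ordered → b.Ordered →
    a.nodeCount + b.nodeCount ≤ N → a.nodeCount + b.nodeCount ≤ f →
    a.nodeCount + b.nodeCount ≤ g → nodeCmpF f a b = nodeCmpF g a b := by
  intro N
  induction N using Nat.strong_induction_on with
  | _ N IH =>
  intro a b f g ha hb hN hf hg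
  obtain ⟨ts⟩ := a
  obtain ⟨us⟩ := b
  have hts : (RTree.node ts).nodeCount = 1 + RTree.nodeCountList ts := rfl
  have hus : (RTree.node us).nodeCount = 1 + RTree.nodeCountList us := rfl
  obtain ⟨f', rfl⟩ : ∃ f', f = f' + 1 := ⟨f - 1, by omega⟩
  obtain ⟨g', rfl⟩ : ∃ g', g = g' + 1 := ⟨g - 1, by omega⟩
  have collapse : ∀ (vs : List RTree), RTree.OrderedList vs →
      vs.Chain' (fun x y => nodeCmp x y ≠ .gt) → RTree.nodeCountList vs < N →
      ∀ h : ℕ, RTree.nodeCountList vs ≤ h →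
      vs.mergeSort (fun x y => nodeCmpF h x y ≠ .gt) = vs := by
    intro vs hvo hvc hvN h hh
    apply List.mergeSort_of_pairwise
    have hpw : vs.Pairwise (fun x y => nodeCmpF h x y ≠ .gt) := by
      haveI : Batteries.TransCmp (nodeCmpF h) := nodeCmpF_transCmp h
      haveI : IsTrans RTree (fun x y => nodeCmpF h x y ≠ .gt) :=
        ⟨fun _ _ _ h1 h2 => Batteries.TransCmp.le_trans h1 h2⟩
      rw [← List.isChain_iff_pairwise]
      refine chain'_imp_mem (fun x hx y hy hxy => ?_) hvc
      by_cases hxyeq : x = y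
      · subst hxyeq
        have hrefl : nodeCmpF h x x = .eq := Batteries.OrientedCmp.cmp_refl (cmp := nodeCmpF h)
        rw [hrefl]
        simp
      · have hble := RTree.nodeCountList_pair_le hx hy hxyeq
        have hxy' : nodeCmp x y = nodeCmpF h x y :=
          IH (x.nodeCount + y.nodeCount) (by omega) x y (x.nodeCount + y.nodeCount) h
            (RTree.OrderedList.mem hvo hx) (RTree.OrderedList.mem hvo hy)
            le_rfl le_rfl (by omega)
        rw [← hxy']
        exact hxy
    exact hpw.imp (fun hx => by simpa using hx)
  obtain ⟨hc1, ho1⟩ := ha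
  obtain ⟨hc2, ho2⟩ := hb
  simp only [nodeCmpF]
  rw [collapse ts ho1 hc1 (by omega) f' (by omega),
      collapse us ho2 hc2 (by omega) f' (by omega),
      collapse ts ho1 hc1 (by omega) g' (by omega),
      collapse us ho2 hc2 (by omega) g' (by omega),
      lexCmp_congr ts us (fun c hcm d hdm => by
        have hcle := RTree.nodeCountList_mem_le hcm
        have hdle := RTree.nodeCountList_mem_le hdm
        exact IH (c.nodeCount + d.nodeCount) (by omega) c d f' g'
          (RTree.OrderedList.mem ho1 hcm) (RTree.OrderedList.mem ho2 hdm)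
          le_rfl (by omega) (by omega))]

theorem pairwise_fuel (vs : List RTree) (hvo : RTree.OrderedList vs)
    (hvc : vs.Chain' (fun x y => nodeCmp x y ≠ .gt)) (h : ℕ)
    (hh : RTree.nodeCountList vs ≤ h) :
    vs.Pairwise (fun x y => nodeCmpF h x y ≠ .gt) := by
  haveI : Batteries.TransCmp (nodeCmpF h) := nodeCmpF_transCmp h
  haveI : IsTrans RTree (fun x y => nodeCmpF h x y ≠ .gt) :=
    ⟨fun _ _ _ h1 h2 => Batteries.TransCmp.le_trans h1 h2⟩
  rw [← List.isChain_iff_pairwise]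
  refine chain'_imp_mem (fun x hx y hy hxy => ?_) hvc
  by_cases hxyeq : x = y
  · subst hxyeq
    have hrefl : nodeCmpF h x x = .eq := Batteries.OrientedCmp.cmp_refl (cmp := nodeCmpF h)
    rw [hrefl]
    simp
  · have hble := RTree.nodeCountList_pair_le hx hy hxyeq
    have hxy' : nodeCmp x y = nodeCmpF h x y :=
      nodeCmpF_stable (x.nodeCount + y.nodeCount) x y (x.nodeCount + y.nodeCount) h
        (RTree.OrderedList.mem hvo hx) (RTree.OrderedList.mem hvo hy)
        le_rfl le_rfl (by omega)
    rw [← hxy']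
    exact hxy

theorem mergeSort_collapse (vs : List RTree) (hvo : RTree.OrderedList vs)
    (hvc : vs.Chain' (fun x y => nodeCmp x y ≠ .gt)) (h : ℕ)
    (hh : RTree.nodeCountList vs ≤ h) :
    vs.mergeSort (fun x y => nodeCmpF h x y ≠ .gt) = vs := by
  apply List.mergeSort_of_pairwise
  exact (pairwise_fuel vs hvo hvc h hh).imp (fun hx => by simpa using hx)

theorem sorted_perm_unique {α : Type*} {c : α → α → Ordering} (hc : Batteries.TransCmp c) :
    ∀ (l m : List α), l.Perm m →
      l.Pairwise (fun x y => c x y ≠ .gt) → m.Pairwise (fun x y => c x y ≠ .gt) →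
      (∀ a ∈ l, ∀ b ∈ m, c a b = .eq → a = b) → l = m := by
  haveI := hc
  intro l
  induction l with
  | nil =>
    intro m p _ _ _
    exact (p.symm.eq_nil).symm
  | cons a l ih =>
    intro m p hl hm hanti
    cases m with
    | nil =>
      have := p.eq_nil
      simp at this
    | cons b m =>
      rw [List.pairwise_cons] at hl hm
      have hab : a = b := by
        have ham : a ∈ b :: m := p.subset (by simp)
        have hbl : b ∈ a :: l := p.symm.subset (by simp)
        have h1 : c a b ≠ .gt := by
          rcases List.mem_cons.1 hbl with rfl | hbl
          · have hrefl : c b b = .eq := Batteries.OrientedCmp.cmp_refl (cmp := c)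
            rw [hrefl]; simp
          · exact hl.1 b hbl
        have h2 : c b a ≠ .gt := by
          rcases List.mem_cons.1 ham with rfl | ham
          · have hrefl : c a a = .eq := Batteries.OrientedCmp.cmp_refl (cmp := c)
            rw [hrefl]; simp
          · exact hm.1 a ham
        have heq : c a b = .eq := by
          cases e : c a b with
          | eq => rfl
          | gt => exact absurd e h1
          | lt => exact absurd (Batteries.OrientedCmp.cmp_eq_gt.2 e) h2
        exact hanti a (by simp) b (by simp) heq
      subst hab
      rw [ih m p.cons_inv hl.2 hm.2
        (fun x hx y hy => hanti x (by simp [hx]) y (by simp [hy]))]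

theorem forall₂_mem_imp {α β : Type*} {R S : α → β → Prop} :
    ∀ {l : List α} {m : List β}, List.Forall₂ R l m →
      (∀ a ∈ l, ∀ b ∈ m, R a b → S a b) → List.Forall₂ S l m
  | _, _, .nil, _ => .nil
  | _, _, .cons h t, himp => .cons (himp _ (by simp) _ (by simp) h)
      (forall₂_mem_imp t (fun a ha b hb hr => himp a (by simp [ha]) b (by simp [hb]) hr))

theorem ordered_eq_main : ∀ (N : ℕ) (a b : RTree), a.nodeCount + b.nodeCount ≤ N →
    a.Ordered → b.Ordered →
    (nodeCmp a b = .eq → a = b) ∧ (TreeIso a b → a = b) := by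
  intro N
  induction N using Nat.strong_induction_on with
  | _ N IH =>
  intro a b hN ha hb
  obtain ⟨ts⟩ := a
  obtain ⟨us⟩ := b
  have hts : (RTree.node ts).nodeCount = 1 + RTree.nodeCountList ts := rfl
  have hus : (RTree.node us).nodeCount = 1 + RTree.nodeCountList us := rfl
  obtain ⟨hc1, ho1⟩ := ha
  obtain ⟨hc2, ho2⟩ := hb
  constructor
  · intro hEq
    set F := (RTree.node ts).nodeCount + (RTree.node us).nodeCount - 1 with hF
    have hEq' : nodeCmpF (F + 1) (RTree.node ts) (RTree.node us) = .eq := by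
      have hfe : F + 1 = (RTree.node ts).nodeCount + (RTree.node us).nodeCount := by omega
      rw [hfe]
      exact hEq
    simp only [nodeCmpF] at hEq'
    rw [mergeSort_collapse ts ho1 hc1 F (by omega),
        mergeSort_collapse us ho2 hc2 F (by omega),
        Ordering.then_eq_eq, Ordering.then_eq_eq] at hEq'
    have h3 := lexCmp_eq_forall₂ hEq'.2.2
    have heq : List.Forall₂ (· = ·) ts us := by
      refine forall₂_mem_imp h3 (fun cc hcc d hd hcd => ?_)
      have hcle := RTree.nodeCountList_mem_le hcc
      have hdle := RTree.nodeCountList_mem_le hd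
      have hstep : nodeCmp cc d = .eq := by
        show nodeCmpF (cc.nodeCount + d.nodeCount) cc d = .eq
        rw [nodeCmpF_stable (cc.nodeCount + d.nodeCount) cc d (cc.nodeCount + d.nodeCount) F
          (RTree.OrderedList.mem ho1 hcc) (RTree.OrderedList.mem ho2 hd)
          le_rfl le_rfl (by omega)]
        exact hcd
      exact (IH (cc.nodeCount + d.nodeCount) (by omega) cc d le_rfl
        (RTree.OrderedList.mem ho1 hcc) (RTree.OrderedList.mem ho2 hd)).1 hstep
    rw [List.forall₂_eq_eq_eq] at heq
    rw [heq]
  · intro hiso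
    cases hiso with
    | @node _ _ us' perm h2 =>
      have hts' : ts = us' := by
        have heq : List.Forall₂ (· = ·) ts us' := by
          refine forall₂_mem_imp h2 (fun cc hcc d hd hcd => ?_)
          have hdus : d ∈ us := perm.mem_iff.2 hd
          have hcle := RTree.nodeCountList_mem_le hcc
          have hdle := RTree.nodeCountList_mem_le hdus
          exact (IH (cc.nodeCount + d.nodeCount) (by omega) cc d le_rfl
            (RTree.OrderedList.mem ho1 hcc) (RTree.OrderedList.mem ho2 hdus)).2 hcd
        rwa [List.forall₂_eq_eq_eq] at heq
      have p2 : ts.Perm us := by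
        rw [hts']
        exact perm.symm
      set h := (RTree.node ts).nodeCount + (RTree.node us).nodeCount with hh
      have hpw1 := pairwise_fuel ts ho1 hc1 h (by omega)
      have hpw2 := pairwise_fuel us ho2 hc2 h (by omega)
      have hfin : ts = us := by
        refine sorted_perm_unique (nodeCmpF_transCmp h) ts us p2 hpw1 hpw2
          (fun x hx y hy hxy => ?_)
        have hxle := RTree.nodeCountList_mem_le hx
        have hyle := RTree.nodeCountList_mem_le hy
        have hstep : nodeCmp x y = .eq := by
          show nodeCmpF (x.nodeCount + y.nodeCount) x y = .eq
          rw [nodeCmpF_stable (x.nodeCount + y.nodeCount) x y (x.nodeCount + y.nodeCount) h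
            (RTree.OrderedList.mem ho1 hx) (RTree.OrderedList.mem ho2 hy)
            le_rfl le_rfl (by omega)]
          exact hxy
        exact (IH (x.nodeCount + y.nodeCount) (by omega) x y le_rfl
          (RTree.OrderedList.mem ho1 hx) (RTree.OrderedList.mem ho2 hy)).1 hstep
      rw [hfin]

end Aux

/-- Proposition 1: two ordered trees of 𝕋 that are isomorphic
(equal up to permutation of siblings) are identical; hence each cograph is
associated with a unique ordered cotree. -/
theorem ordered_iso_trees_identical (T' T'' : RTree)
    (h1 : T'.WF) (h2 : T''.WF) (o1 : T'.Ordered) (o2 : T''.Ordered)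
    (hiso : TreeIso T' T'') : T' = T'' := by
  exact (ordered_eq_main (T'.nodeCount + T''.nodeCount) T' T'' le_rfl o1 o2).2 hiso
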